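/- arXiv:2510.25209 — 8 statements merged into one kernel-verified Lean document; each statement's English description precedes it below -/
import Mathlib

section
/- Every stable matching in a bipartite graph with strict preferences on both sides is popular. -/
/-- A matching in a bipartite graph `G = (A ∪ B, E)`, given as a pair of
partner functions that are consistent and respect the edge set. -/
structure BMatching (A B : Type*) (E : A → B → Prop) where
  mA : A → Option B
  mB : B → Option A
  consistent : ∀ a b, mA a = some b ↔ mB b = some a
  valid : ∀ a b, mA a = some b → E a b

/-- Vote of a vertex with (strict, rank-based) preferences `r` comparing two
possible partners; being unmatched (`none`) is least preferred. -/
def voteRank {Y : Type*} (r : Y → ℕ) : Option Y → Option Y → ℤ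
  | some y, some y' => if r y < r y' then 1 else if r y' < r y then -1 else 0
  | some _, none => 1
  | none, some _ => -1
  | none, none => 0

/-- `y` is strictly better (for ranks `r`) than the possible partner `o`. -/
def improves {Y : Type*} (r : Y → ℕ) (y : Y) : Option Y → Prop
  | none => True
  | some y' => r y < r y'

/-!
Split the vertices according to the competing matching `N`. A vertex unmatched
in `N` never prefers `N`. For an edge `(a, b)` of `N` outside `M`, both `a` and `b` preferring `N`
would make `(a, b)` a blocking pair of `M`, so the two votes of `a` and `b` add up to at least `0`.
Summing over the edges of `N` and the vertices it leaves unmatched gives the theorem.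
-/

section Vote

variable {Y : Type*} (r : Y → ℕ)

lemma voteRank_none_nonneg (o : Option Y) : 0 ≤ voteRank r o none := by
  cases o <;> simp [voteRank]

lemma voteRank_some_self (y : Y) : voteRank r (some y) (some y) = 0 := by
  simp [voteRank]

lemma voteRank_some_of_improves {y : Y} {o : Option Y} (h : improves r y o) :
    voteRank r o (some y) = -1 := by
  cases o with
  | none => rfl
  | some y' => simp only [improves] at h; simp [voteRank, h, h.not_gt]

variable {r}

lemma voteRank_some_of_not_improves (hr : Function.Injective r) {y : Y} {o : Option Y}
    (hne : o ≠ some y) (h : ¬ improves r y o) : voteRank r o (some y) = 1 := by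
  cases o with
  | none => exact absurd trivial h
  | some y' =>
    have hlt : r y' < r y :=
      (not_lt.mp h).lt_of_ne (hr.ne fun e => hne (by rw [e]))
    simp [voteRank, hlt]

end Vote

lemma Option.elim_zero_eq_sum {α M : Type*} [Fintype α] [DecidableEq α] [AddCommMonoid M]
    (o : Option α) (f : α → M) : o.elim 0 f = ∑ x, if o = some x then f x else 0 := by
  cases o <;> simp

namespace BMatching

variable {A B : Type*} {E : A → B → Prop}

lemma sum_eq_sum_partner_add_sum_unmatched [Fintype A] [Fintype B] {β : Type*}
    [AddCommMonoid β] (N : BMatching A B E) (f : B → β) :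
    ∑ b, f b = ∑ a, (N.mA a).elim 0 f + ∑ b, (N.mB b).elim (f b) (fun _ => 0) := by
  classical
  have hsplit : ∀ b, f b = (N.mB b).elim 0 (fun _ => f b) + (N.mB b).elim (f b) (fun _ => 0) := by
    intro b
    cases N.mB b <;> simp
  have hpartner : ∀ b, (N.mB b).elim 0 (fun _ => f b) =
      ∑ a, if N.mA a = some b then f b else 0 := by
    intro b
    simp only [Option.elim_zero_eq_sum, N.consistent]
  calc ∑ b, f b
      = ∑ b, ((N.mB b).elim 0 (fun _ => f b) + (N.mB b).elim (f b) (fun _ => 0)) :=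
        Finset.sum_congr rfl fun b _ => hsplit b
    _ = ∑ a, (N.mA a).elim 0 f + ∑ b, (N.mB b).elim (f b) (fun _ => 0) := by
        rw [Finset.sum_add_distrib, Finset.sum_congr rfl fun b _ => hpartner b, Finset.sum_comm]
        simp only [Option.elim_zero_eq_sum]

lemma voteRank_add_voteRank_nonneg (M : BMatching A B E) {rankA : A → B → ℕ}
    {rankB : B → A → ℕ} {a : A} {b : B} (ha : Function.Injective (rankA a))
    (hb : Function.Injective (rankB b))
    (hblock : M.mA a ≠ some b →
      ¬ (improves (rankA a) b (M.mA a) ∧ improves (rankB b) a (M.mB b))) :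
    0 ≤ voteRank (rankA a) (M.mA a) (some b) + voteRank (rankB b) (M.mB b) (some a) := by
  by_cases hM : M.mA a = some b
  · rw [hM, (M.consistent a b).mp hM, voteRank_some_self, voteRank_some_self, add_zero]
  · have hM' : M.mB b ≠ some a := fun e => hM ((M.consistent a b).mpr e)
    by_cases hia : improves (rankA a) b (M.mA a)
    · rw [voteRank_some_of_improves _ hia,
        voteRank_some_of_not_improves hb hM' fun hib => hblock hM ⟨hia, hib⟩]
      norm_num
    · rw [voteRank_some_of_not_improves ha hM hia]
      by_cases hib : improves (rankB b) a (M.mB b)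
      · rw [voteRank_some_of_improves _ hib]; norm_num
      · rw [voteRank_some_of_not_improves hb hM' hib]; norm_num

end BMatching

/-- Every stable matching in a bipartite graph with strict preferences on both
sides is popular: for every matching `N`, the number of vertices preferring `M`
is at least the number preferring `N`, i.e. the vote margin of `M` vs `N` is
nonnegative. -/
theorem stable_implies_popular
    {A B : Type*} [Fintype A] [Fintype B] (E : A → B → Prop)
    (rankA : A → B → ℕ) (rankB : B → A → ℕ)
    (hA : ∀ a, Function.Injective (rankA a))
    (hB : ∀ b, Function.Injective (rankB b))
    (M : BMatching A B E)
    (hstable : ∀ a b, E a b → M.mA a ≠ some b →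
      ¬ (improves (rankA a) b (M.mA a) ∧ improves (rankB b) a (M.mB b))) :
    ∀ N : BMatching A B E,
      0 ≤ (∑ a, voteRank (rankA a) (M.mA a) (N.mA a)) +
          (∑ b, voteRank (rankB b) (M.mB b) (N.mB b)) := by
  intro N
  set h := fun b => voteRank (rankB b) (M.mB b) (N.mB b)
  have hedge : ∀ a, 0 ≤ voteRank (rankA a) (M.mA a) (N.mA a) + (N.mA a).elim 0 h := by
    intro a
    cases hNa : N.mA a with
    | none => simpa using voteRank_none_nonneg _ _
    | some b =>
      have hNb : N.mB b = some a := (N.consistent a b).mp hNa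
      simpa [h, hNb] using M.voteRank_add_voteRank_nonneg (hA a) (hB b)
        (hstable a b (N.valid a b hNa))
  have hunmatched : ∀ b, 0 ≤ (N.mB b).elim (h b) (fun _ => 0) := by
    intro b
    cases hNb : N.mB b with
    | none => simpa [h, hNb] using voteRank_none_nonneg _ _
    | some a => exact le_rfl
  rw [N.sum_eq_sum_partner_add_sum_unmatched h, ← add_assoc, ← Finset.sum_add_distrib]
  exact add_nonneg (Finset.sum_nonneg fun a _ => hedge a)
    (Finset.sum_nonneg fun b _ => hunmatched b)
end

section
/- In a bipartite graph G with a maximum matching M, classify each vertex as even/odd (reachable from some M-unmatched vertex by an alternating path of even/odd length) or unreachable. Then the sets E, O, U of even, odd, and unreachable vertices are pairwise disjoint. -/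
open SimpleGraph

/-- Edges of a list alternate w.r.t. membership in `S`; the flag records whether
the next edge must belong to `S`. -/
def altEdges {V : Type*} (S : Set (Sym2 V)) : Bool → List (Sym2 V) → Prop
  | _, [] => True
  | flag, e :: rest => (e ∈ S ↔ flag = true) ∧ altEdges S (!flag) rest

/-- `v` is reachable from some `M`-unmatched vertex by an alternating path
(starting with a non-matching edge) of even length. -/
def EvenVtx {V : Type*} (G : SimpleGraph V) (M : G.Subgraph) (v : V) : Prop :=
  ∃ u, u ∉ M.verts ∧ ∃ p : G.Walk u v,
    p.IsPath ∧ altEdges M.edgeSet false p.edges ∧ Even p.length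

/-- `v` is reachable from some `M`-unmatched vertex by an alternating path of
odd length. -/
def OddVtx {V : Type*} (G : SimpleGraph V) (M : G.Subgraph) (v : V) : Prop :=
  ∃ u, u ∉ M.verts ∧ ∃ p : G.Walk u v,
    p.IsPath ∧ altEdges M.edgeSet false p.edges ∧ Odd p.length

/-- `v` is not reachable from any `M`-unmatched vertex by an alternating path. -/
def UnreachableVtx {V : Type*} (G : SimpleGraph V) (M : G.Subgraph) (v : V) : Prop :=
  ∀ u (p : G.Walk u v), u ∉ M.verts → p.IsPath →
    altEdges M.edgeSet false p.edges → False

/-!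
Unreachable vertices are neither even nor odd by definition. If `v` were both, an odd
alternating path from an unmatched `u₁` to `v`, followed by the reverse of an even one from an
unmatched `u₀`, is an alternating walk of odd length between unmatched vertices. In a bipartite
graph every closed walk is even, so cutting out cycles turns it into an alternating path of the
same parity, i.e. an augmenting path. Flipping the matching along it covers `u₀` and `u₁` as
well, contradicting maximality.
-/

section AltEdges

variable {V : Type*} {S T : Set (Sym2 V)}

theorem altEdges_append (l₁ l₂ : List (Sym2 V)) (b : Bool) :
    altEdges S b (l₁ ++ l₂) ↔ altEdges S b l₁ ∧ altEdges S (not^[l₁.length] b) l₂ := by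
  induction l₁ generalizing b with
  | nil => simp [altEdges]
  | cons e l ih => simp [altEdges, ih, Function.iterate_succ_apply, and_assoc]

theorem altEdges_reverse {l : List (Sym2 V)} {b : Bool} (h : altEdges S b l) :
    altEdges S (not^[l.length + 1] b) l.reverse := by
  induction l generalizing b with
  | nil => trivial
  | cons e l ih =>
    obtain ⟨he, hl⟩ := h
    rw [List.reverse_cons, altEdges_append, List.length_reverse, ← Function.iterate_add_apply]
    refine ⟨by simpa [Function.iterate_succ_apply] using ih hl, ?_, trivial⟩
    rwa [List.length_cons, show l.length + (l.length + 1 + 1) = 2 * (l.length + 1) by ring,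
      Bool.involutive_not.iterate_two_mul]

theorem altEdges_congr {l : List (Sym2 V)} {b : Bool} (hST : ∀ e ∈ l, e ∈ S ↔ e ∈ T)
    (h : altEdges S b l) : altEdges T b l := by
  induction l generalizing b with
  | nil => trivial
  | cons e l ih =>
    exact ⟨(hST e List.mem_cons_self).symm.trans h.1,
      ih (fun e he => hST e (List.mem_cons_of_mem _ he)) h.2⟩

end AltEdges

namespace SimpleGraph.Walk

variable {V : Type*} {G : SimpleGraph V} {S : Set (Sym2 V)}

theorem altEdges_bypass [DecidableEq V] (c : G.Coloring Bool) {u v : V} (p : G.Walk u v)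
    {b : Bool} (h : altEdges S b p.edges) : altEdges S b p.bypass.edges := by
  induction p generalizing b with
  | nil => trivial
  | @cons u w v huw p ih =>
    obtain ⟨he, hp⟩ := h
    have ih := ih hp
    rw [bypass]
    split_ifs with hs
    · -- `w ⇝ u` closed up by the edge `uw` is an even cycle
      have hodd : Odd (p.bypass.takeUntil u hs).length := by
        simpa [Nat.even_add_one] using
          (c.even_length_iff_congr (cons huw (p.bypass.takeUntil u hs))).mpr Iff.rfl
      rw [← p.bypass.take_spec hs, edges_append, altEdges_append, length_edges,
        Bool.involutive_not.iterate_odd hodd, Bool.not_not] at ih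
      exact ih.2
    · exact ⟨he, ih⟩

end SimpleGraph.Walk

namespace SimpleGraph.Subgraph

variable {V : Type*} {G : SimpleGraph V} {M : G.Subgraph}

theorem IsMatching.deleteVerts_pair (hM : M.IsMatching) {v w : V} (hvw : M.Adj v w) :
    (M.deleteVerts {v, w}).IsMatching := by
  rintro x ⟨hxM, hx⟩
  obtain ⟨y, hxy, hy⟩ := hM hxM
  have hyvw : y ∉ ({v, w} : Set V) := by
    rintro (rfl | rfl)
    · exact hx (.inr (hM.eq_of_adj_left hxy.symm hvw))
    · exact hx (.inl (hM.eq_of_adj_right hxy hvw))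
  exact ⟨y, deleteVerts_adj.mpr ⟨hxM, hx, M.edge_vert hxy.symm, hyvw, hxy⟩,
    fun z hz => hy z (deleteVerts_adj.mp hz).2.2.2.2⟩

theorem IsMatching.exists_swap (hM : M.IsMatching) {a v w : V} (ha : a ∉ M.verts)
    (hav : G.Adj a v) (hvw : M.Adj v w) :
    ∃ M' : G.Subgraph, M'.IsMatching ∧ M'.verts = insert a (M.verts \ {w}) ∧
      ∀ x y, x ∉ ({a, v} : Set V) → y ∉ ({a, v} : Set V) → (M'.Adj x y ↔ M.Adj x y) := by
  have hdisj : Disjoint (M.deleteVerts {v, w}).support (G.subgraphOfAdj hav).support := by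
    refine Set.disjoint_of_subset (support_subset_verts _) (support_subset_verts _) ?_
    rw [Set.disjoint_left]
    rintro x ⟨hxM, hx⟩ (rfl | rfl)
    exacts [ha hxM, hx (.inl rfl)]
  refine ⟨_, (hM.deleteVerts_pair hvw).sup (.subgraphOfAdj hav) hdisj, ?_, ?_⟩
  · have := M.edge_vert hvw
    have := hvw.ne
    ext x
    simp only [verts_sup, deleteVerts_verts, subgraphOfAdj_verts, Set.mem_union, Set.mem_sdiff,
      Set.mem_insert_iff, Set.mem_singleton_iff]
    grind
  · intro x y hx hy
    simp only [Set.mem_insert_iff, Set.mem_singleton_iff, not_or] at hx hy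
    simp only [sup_adj, deleteVerts_adj, subgraphOfAdj_adj, Sym2.eq_iff, Set.mem_insert_iff,
      Set.mem_singleton_iff]
    constructor
    · rintro (h | h)
      · exact h.2.2.2.2
      · grind
    · intro hxy
      left
      refine ⟨M.edge_vert hxy, ?_, M.edge_vert hxy.symm, ?_, hxy⟩
      · rintro (rfl | rfl)
        exacts [hx.2 rfl, hy.2 (hM.eq_of_adj_left hxy hvw.symm)]
      · rintro (rfl | rfl)
        exacts [hy.2 rfl, hx.2 (hM.eq_of_adj_right hxy hvw)]

theorem IsMatching.exists_augment : ∀ {M : G.Subgraph} {a b : V} (P : G.Walk a b),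
    M.IsMatching → P.IsPath → Odd P.length → a ∉ M.verts → b ∉ M.verts →
      altEdges M.edgeSet false P.edges →
      ∃ M' : G.Subgraph, M'.IsMatching ∧ M'.verts = insert a (insert b M.verts)
  | _, _, _, .nil, _, _, hodd, _, _, _ => absurd hodd (by simp)
  | M, a, b, .cons hab .nil, hM, _, _, ha, hb, _ => by
    refine ⟨M ⊔ G.subgraphOfAdj hab, hM.sup (.subgraphOfAdj hab) ?_, ?_⟩
    · refine Set.disjoint_of_subset (support_subset_verts _) (support_subset_verts _) ?_
      rw [subgraphOfAdj_verts, Set.disjoint_insert_right, Set.disjoint_singleton_right]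
      exact ⟨ha, hb⟩
    · rw [verts_sup, subgraphOfAdj_verts, Set.union_insert, Set.union_singleton]
  | M, a, b, .cons (v := v) hav (.cons (v := w) hvw P), hM, hpath, hodd, ha, hb, halt => by
    -- rematch `v` to `a`; then `P` is an augmenting path from the newly unmatched `w`
    obtain ⟨-, hvw_mem, hP⟩ := halt
    have hvwM : M.Adj v w := by simpa using hvw_mem
    have hwM : w ∈ M.verts := M.edge_vert hvwM.symm
    obtain ⟨M₁, hM₁, hverts₁, hadj₁⟩ := hM.exists_swap ha hav hvwM
    obtain ⟨⟨hP_path, hvP⟩, haP⟩ : (P.IsPath ∧ v ∉ P.support) ∧ a ∉ v :: P.support := by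
      simpa only [Walk.cons_isPath_iff, Walk.support_cons] using hpath
    have hP₁ : altEdges M₁.edgeSet false P.edges := by
      refine altEdges_congr (fun e he => ?_) hP
      induction e using Sym2.ind with
      | _ x y =>
        have hx := P.fst_mem_support_of_mem_edges he
        have hy := P.snd_mem_support_of_mem_edges he
        exact (hadj₁ x y (by grind) (by grind)).symm
    have hbP := P.end_mem_support
    obtain ⟨M', hM', hverts'⟩ :=
      exists_augment P hM₁ hP_path (by simpa [Nat.odd_add_one] using hodd) (by grind) (by grind) hP₁
    refine ⟨M', hM', ?_⟩
    rw [hverts', hverts₁]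
    ext x
    grind

/-- `ncard` is `0` on infinite sets, so finiteness of `M` has to come from maximality. -/
theorem finite_verts_of_forall_ncard_le
    (hmax : ∀ M' : G.Subgraph, M'.IsMatching → M'.verts.ncard ≤ M.verts.ncard) {u v : V}
    (huv : G.Adj u v) : M.verts.Finite := by
  refine Set.finite_of_ncard_pos (lt_of_lt_of_le ?_ (hmax _ (.subgraphOfAdj huv)))
  rw [subgraphOfAdj_verts, Set.ncard_pair huv.ne]
  exact two_pos

theorem IsMatching.not_altEdges_of_forall_ncard_le (c : G.Coloring Bool) (hM : M.IsMatching)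
    (hmax : ∀ M' : G.Subgraph, M'.IsMatching → M'.verts.ncard ≤ M.verts.ncard) {a b : V}
    (W : G.Walk a b) (hodd : Odd W.length) (ha : a ∉ M.verts) (hb : b ∉ M.verts) :
    ¬ altEdges M.edgeSet false W.edges := by
  classical
  intro hW
  have hab : a ≠ b := by
    rintro rfl
    simp [c.odd_length_iff_not_congr] at hodd
  have hodd' : Odd W.bypass.length :=
    (c.odd_length_iff_not_congr _).mpr ((c.odd_length_iff_not_congr W).mp hodd)
  obtain ⟨M', hM', hverts⟩ :=
    hM.exists_augment W.bypass W.bypass_isPath hodd' ha hb (W.altEdges_bypass c hW)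
  have hfin : M.verts.Finite :=
    finite_verts_of_forall_ncard_le hmax (W.adj_snd (Walk.not_nil_of_ne hab))
  have hcard := hmax M' hM'
  rw [hverts, Set.ncard_insert_of_notMem (by simp [hab, ha]) (hfin.insert b),
    Set.ncard_insert_of_notMem hb hfin] at hcard
  omega

end SimpleGraph.Subgraph

theorem dm_classes_pairwise_disjoint_general
    {V : Type*} (G : SimpleGraph V)
    (side : V → Bool) (hbip : ∀ u v, G.Adj u v → side u ≠ side v)
    (M : G.Subgraph) (hM : M.IsMatching)
    (hmax : ∀ M' : G.Subgraph, M'.IsMatching → M'.verts.ncard ≤ M.verts.ncard) :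
    (∀ v, ¬ (EvenVtx G M v ∧ OddVtx G M v)) ∧
    (∀ v, ¬ (EvenVtx G M v ∧ UnreachableVtx G M v)) ∧
    (∀ v, ¬ (OddVtx G M v ∧ UnreachableVtx G M v)) := by
  refine ⟨?_, fun v ⟨⟨u, hu, p, hp, halt, _⟩, hunr⟩ => hunr u p hu hp halt,
    fun v ⟨⟨u, hu, p, hp, halt, _⟩, hunr⟩ => hunr u p hu hp halt⟩
  rintro v ⟨⟨u₀, hu₀, p, -, hp, hpeven⟩, ⟨u₁, hu₁, q, -, hq, hqodd⟩⟩
  refine hM.not_altEdges_of_forall_ncard_le (Coloring.mk side (hbip _ _ ·)) hmax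
    (q.append p.reverse) ?_ hu₁ hu₀ ?_
  · rw [Walk.length_append, Walk.length_reverse]
    exact hqodd.add_even hpeven
  · rw [Walk.edges_append, Walk.edges_reverse, altEdges_append, Walk.length_edges,
      Bool.involutive_not.iterate_odd hqodd]
    have hp' := altEdges_reverse hp
    rw [Walk.length_edges, Bool.involutive_not.iterate_odd hpeven.add_one] at hp'
    exact ⟨hq, hp'⟩

/-- In a bipartite graph with a maximum matching `M`, the sets of even, odd and
unreachable vertices are pairwise disjoint. -/
theorem dm_classes_pairwise_disjoint
    {V : Type*} [Fintype V] (G : SimpleGraph V)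
    (side : V → Bool) (hbip : ∀ u v, G.Adj u v → side u ≠ side v)
    (M : G.Subgraph) (hM : M.IsMatching)
    (hmax : ∀ M' : G.Subgraph, M'.IsMatching → M'.verts.ncard ≤ M.verts.ncard) :
    (∀ v, ¬ (EvenVtx G M v ∧ OddVtx G M v)) ∧
    (∀ v, ¬ (EvenVtx G M v ∧ UnreachableVtx G M v)) ∧
    (∀ v, ¬ (OddVtx G M v ∧ UnreachableVtx G M v)) :=
  dm_classes_pairwise_disjoint_general G side hbip M hM hmax
end

section
/- In the one-sided preference model, a matching M is popular if and only if (i) every f-job (a job that is some applicant's top choice) is matched by M to an applicant whose top choice it is, and (ii) every applicant is matched to either its top-choice job f_a or its most-preferred non-f-job r_a. -/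
variable {A B : Type*}

/-- `b` is applicant `a`'s most preferred neighbour (its top choice `f_a`). -/
def isTop (E : A → B → Prop) (rank : A → B → ℕ) (a : A) (b : B) : Prop :=
  E a b ∧ ∀ b', E a b' → b' ≠ b → rank a b < rank a b'

/-- `b` is an f-job: some applicant's top choice. -/
def isF (E : A → B → Prop) (rank : A → B → ℕ) (b : B) : Prop :=
  ∃ a, isTop E rank a b

/-- `b` is `a`'s most preferred non-f-job `r_a`. -/
def isR (E : A → B → Prop) (rank : A → B → ℕ) (a : A) (b : B) : Prop :=
  E a b ∧ ¬ isF E rank b ∧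
    ∀ b', E a b' → ¬ isF E rank b' → b' ≠ b → rank a b < rank a b'

/-- Popularity in the one-sided model: only applicants in `A` vote. -/
def PopularOS [Fintype A] (E : A → B → Prop) (rank : A → B → ℕ)
    (M : BMatching A B E) : Prop :=
  ∀ N : BMatching A B E, 0 ≤ ∑ a, voteRank (rank a) (M.mA a) (N.mA a)


open Function

/-! Suppose an applicant `a` prefers a job `b` to its partner in `M`. If `b` is free, giving it to
`a` wins a vote. If the holder `a'` of `b` has a top choice `b' ≠ b`, giving `b` to `a` and `b'`
to `a'` and unmatching the former holder of `b'` wins two votes and loses at most one. So in a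
popular matching every job that an applicant prefers to its partner is an f-job held by an
applicant whose top choice it is; both conditions follow (for (ii), apply this to `r_a`).
Conversely, under the two conditions an applicant preferring a matching `N` to `M` gets in `N` an
f-job, whose `M`-holder has it as top choice and so prefers `M`; distinct such applicants give
distinct holders, so `M` wins at least as many votes as it loses. -/

theorem sum_neg_of_eq_neg_one_of_le_one {ι : Type*} [Fintype ι] (v : ι → ℤ) {a a' h : ι}
    (hne : a ≠ a') (ha : v a = -1) (ha' : v a' = -1) (hh : v h ≤ 1)
    (hzero : ∀ x, x ≠ a → x ≠ a' → x ≠ h → v x = 0) :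
    ∑ x, v x < 0 := by
  classical
  calc ∑ x, v x
      ≤ ∑ x, ((if x = h then 1 else 0) - (if x = a then 1 else 0) -
          (if x = a' then 1 else 0)) :=
        Finset.sum_le_sum fun x _ => by split_ifs <;> subst_vars <;> grind
    _ = -1 := by simp [Finset.sum_sub_distrib]
    _ < 0 := by norm_num

theorem sum_nonneg_of_injOn {ι : Type*} [Fintype ι] (v : ι → ℤ) (φ : ι → ι)
    (hv : ∀ x, -1 ≤ v x) (hφ : ∀ x, v x < 0 → 0 < v (φ x))
    (hinj : Set.InjOn φ {x | v x < 0}) :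
    0 ≤ ∑ x, v x := by
  classical
  set P := Finset.univ.filter fun x => v x < 0
  have hmem : ∀ x, x ∈ P ↔ v x < 0 := by simp [P]
  calc 0 ≤ ∑ x ∈ P, (v x + v (φ x)) :=
        Finset.sum_nonneg fun x hx => by linarith [hv x, hφ x ((hmem x).1 hx)]
    _ = ∑ x ∈ P, v x + ∑ y ∈ P.image φ, v y := by
        rw [Finset.sum_add_distrib, Finset.sum_image fun x hx y hy =>
          hinj ((hmem x).1 hx) ((hmem y).1 hy)]
    _ ≤ ∑ x ∈ P, v x + ∑ y ∈ Pᶜ, v y := by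
        refine add_le_add le_rfl (Finset.sum_le_sum_of_subset_of_nonneg ?_ fun y hy _ => ?_)
        · intro y hy
          obtain ⟨x, hx, rfl⟩ := Finset.mem_image.1 hy
          simpa [hmem] using (hφ x ((hmem x).1 hx)).le
        · simpa [hmem] using hy
    _ = ∑ x, v x := Finset.sum_add_sum_compl P v

section Vote

variable {Y : Type*} (r : Y → ℕ)

theorem voteRank_self (o : Option Y) : voteRank r o o = 0 := by
  cases o <;> simp [voteRank]

theorem voteRank_swap (o o' : Option Y) : voteRank r o' o = -voteRank r o o' := by
  rcases o with _ | y <;> rcases o' with _ | y' <;> simp only [voteRank] <;> (try split_ifs) <;>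
    omega

theorem neg_one_le_voteRank (o o' : Option Y) : -1 ≤ voteRank r o o' := by
  rcases o with _ | y <;> rcases o' with _ | y' <;> simp only [voteRank] <;> (try split_ifs) <;>
    omega

theorem voteRank_le_one (o o' : Option Y) : voteRank r o o' ≤ 1 := by
  have := neg_one_le_voteRank r o' o
  rw [voteRank_swap] at this
  omega

variable {r}

theorem voteRank_eq_neg_one_iff {o o' : Option Y} :
    voteRank r o o' = -1 ↔ ∃ y, o' = some y ∧ ∀ c, o = some c → r y < r c := by
  rcases o with _ | c <;> rcases o' with _ | y <;> simp only [voteRank] <;> (try split_ifs) <;>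
    simp <;> omega

theorem voteRank_eq_one_iff {o o' : Option Y} :
    voteRank r o o' = 1 ↔ ∃ y, o = some y ∧ ∀ c, o' = some c → r y < r c := by
  rw [← voteRank_eq_neg_one_iff, voteRank_swap r o o']
  omega

end Vote

theorem exists_forall_lt_of_injective {α : Type*} {r : α → ℕ} (hr : Injective r)
    {p : α → Prop} {c : α} (hc : p c) :
    ∃ b, p b ∧ ∀ b', p b' → b' ≠ b → r b < r b' := by
  obtain ⟨b, hb, hmin⟩ := (InvImage.wf r wellFounded_lt).has_min {x | p x} ⟨c, hc⟩
  exact ⟨b, hb, fun b' hb' hne => (not_lt.1 (hmin b' hb')).lt_of_ne (hr.ne hne.symm)⟩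

section Preferences

variable {E : A → B → Prop} {rank : A → B → ℕ} {a : A} {b : B}

theorem exists_isTop (hstrict : Injective (rank a)) (hab : E a b) : ∃ f, isTop E rank a f :=
  exists_forall_lt_of_injective hstrict hab

theorem exists_isR (hstrict : Injective (rank a)) (hab : E a b) (hb : ¬ isF E rank b) :
    ∃ r, isR E rank a r := by
  obtain ⟨r, ⟨hr, hrF⟩, hmin⟩ :=
    exists_forall_lt_of_injective hstrict (p := fun b => E a b ∧ ¬ isF E rank b) ⟨hab, hb⟩
  exact ⟨r, hr, hrF, fun b' hb' hb'F => hmin b' ⟨hb', hb'F⟩⟩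

end Preferences

namespace BMatching

variable {E : A → B → Prop} (M : BMatching A B E)

theorem eq_of_mA_eq_some {x y : A} {c : B} (hx : M.mA x = some c) (hy : M.mA y = some c) :
    x = y := by
  rw [M.consistent] at hx hy
  exact Option.some_injective _ (hx.symm.trans hy)

theorem mA_ne_some_of_mB_eq_none {b : B} (hb : M.mB b = none) (x : A) : M.mA x ≠ some b := by
  simp [M.consistent, hb]

theorem exists_mA_eq (g : A → Option B) (hvalid : ∀ a b, g a = some b → E a b)
    (hinj : ∀ a a' b, g a = some b → g a' = some b → a = a') :
    ∃ N : BMatching A B E, N.mA = g := by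
  classical
  refine ⟨⟨g, fun b => if h : ∃ a, g a = some b then some h.choose else none,
    fun a b => ⟨fun h => ?_, fun h => ?_⟩, hvalid⟩, rfl⟩
  · rw [dif_pos ⟨a, h⟩]
    exact congrArg some (hinj _ _ _ (⟨a, h⟩ : ∃ a, g a = some b).choose_spec h)
  · split_ifs at h with he
    obtain rfl := Option.some_injective _ h
    exact he.choose_spec

variable {a : A} {b : B}

theorem exists_mA_eq_update [DecidableEq A] (hab : E a b) (hfree : ∀ x, M.mA x ≠ some b) :
    ∃ N : BMatching A B E, N.mA = update M.mA a (some b) := by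
  refine exists_mA_eq _ (fun x c hx => ?_) (fun x y c hx hy => ?_)
  · rcases eq_or_ne x a with rfl | hxa
    · rw [update_self, Option.some_inj] at hx
      exact hx ▸ hab
    · rw [update_of_ne hxa] at hx
      exact M.valid _ _ hx
  · simp only [update_apply] at hx hy
    split_ifs at hx hy with hxa hya hya
    · exact hxa.trans hya.symm
    · exact absurd (hy.trans hx.symm) (hfree y)
    · exact absurd (hx.trans hy.symm) (hfree x)
    · exact M.eq_of_mA_eq_some hx hy

theorem exists_mA_eq_unassign [DecidableEq B] (b : B) :
    ∃ N : BMatching A B E, ∀ x, N.mA x = if M.mA x = some b then none else M.mA x := by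
  refine (exists_mA_eq _ (fun x c hx => ?_) (fun x y c hx hy => ?_)).imp fun N hN => congrFun hN
  · split_ifs at hx
    exact M.valid _ _ hx
  · split_ifs at hx hy
    exact M.eq_of_mA_eq_some hx hy

theorem exists_mA_eq_shift [DecidableEq A] [DecidableEq B] {a' : A} {b' : B}
    (hheld : M.mA a' = some b) (hab : E a b) (hab' : E a' b') (haa' : a ≠ a') (hbb' : b' ≠ b) :
    ∃ N : BMatching A B E, N.mA a = some b ∧ N.mA a' = some b' ∧
      ∀ x, x ≠ a → x ≠ a' → N.mA x = if M.mA x = some b' then none else M.mA x := by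
  obtain ⟨N₀, hN₀⟩ := M.exists_mA_eq_unassign b'
  obtain ⟨N₁, hN₁⟩ := N₀.exists_mA_eq_update hab' fun x => by
    rw [hN₀]
    split_ifs with hx
    exacts [(Option.some_ne_none b').symm, hx]
  have hfree : ∀ x, N₁.mA x ≠ some b := fun x hx => by
    rcases eq_or_ne x a' with rfl | hxa'
    · rw [hN₁, update_self, Option.some_inj] at hx
      exact hbb' hx
    · rw [hN₁, update_of_ne hxa', hN₀] at hx
      split_ifs at hx
      exact hxa' (M.eq_of_mA_eq_some hx hheld)
  obtain ⟨N₂, hN₂⟩ := N₁.exists_mA_eq_update hab hfree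
  refine ⟨N₂, by rw [hN₂, update_self], ?_, fun x hxa hxa' => ?_⟩
  · rw [hN₂, update_of_ne haa'.symm, hN₁, update_self]
  · rw [hN₂, update_of_ne hxa, hN₁, update_of_ne hxa', hN₀]

end BMatching

namespace PopularOS

variable [Fintype A] {E : A → B → Prop} {rank : A → B → ℕ} {M : BMatching A B E}
  {a a' : A} {b b' : B}

theorem voteRank_ne_neg_one_of_mB_eq_none (hpop : PopularOS E rank M) (hab : E a b)
    (hfree : M.mB b = none) : voteRank (rank a) (M.mA a) (some b) ≠ -1 := by
  classical
  obtain ⟨N, hN⟩ := M.exists_mA_eq_update hab (M.mA_ne_some_of_mB_eq_none hfree)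
  have hsum := hpop N
  rw [Fintype.sum_eq_single a fun x hx => by rw [hN, update_of_ne hx, voteRank_self],
    hN, update_self] at hsum
  omega

theorem voteRank_ne_neg_one_of_mA_eq (hpop : PopularOS E rank M) (hheld : M.mA a' = some b)
    (hab : E a b) (hab' : E a' b') (hpref : rank a' b' < rank a' b) :
    voteRank (rank a) (M.mA a) (some b) ≠ -1 := by
  classical
  intro hvote
  have haa' : a ≠ a' := by
    rintro rfl
    rw [hheld, voteRank_self] at hvote
    omega
  have hbb' : b' ≠ b := ne_of_apply_ne (rank a') hpref.ne
  obtain ⟨N, hNa, hNa', hN⟩ := M.exists_mA_eq_shift hheld hab hab' haa' hbb'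
  -- the holder of `b'` in `M`, or the harmless dummy `a` when `b'` is free
  have hholder : ∀ x, M.mA x = some b' → x = (M.mB b').getD a := fun x hx => by
    rw [(M.consistent x b').1 hx]
    rfl
  refine absurd (hpop N) (not_le.2 (sum_neg_of_eq_neg_one_of_le_one _
    (h := (M.mB b').getD a) haa' ?_ ?_ (voteRank_le_one _ _ _) fun x hxa hxa' hxh => ?_))
  · rwa [hNa]
  · rw [hNa', hheld, voteRank_eq_neg_one_iff]
    exact ⟨b', rfl, fun c hc => Option.some_inj.1 hc ▸ hpref⟩
  · rw [hN x hxa hxa', if_neg fun hx => hxh (hholder x hx), voteRank_self]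

theorem exists_isTop_of_voteRank_eq_neg_one (hstrict : ∀ a, Injective (rank a))
    (hpop : PopularOS E rank M) (hab : E a b)
    (hvote : voteRank (rank a) (M.mA a) (some b) = -1) :
    ∃ a', M.mB b = some a' ∧ isTop E rank a' b := by
  cases hb : M.mB b with
  | none => exact absurd hvote (hpop.voteRank_ne_neg_one_of_mB_eq_none hab hb)
  | some a' =>
    refine ⟨a', rfl, ?_⟩
    have hheld : M.mA a' = some b := (M.consistent a' b).2 hb
    obtain ⟨f, hf⟩ := exists_isTop (hstrict a') (M.valid _ _ hheld)
    obtain rfl | hne := eq_or_ne b f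
    · exact hf
    · exact absurd hvote (hpop.voteRank_ne_neg_one_of_mA_eq hheld hab hf.1
        (hf.2 b (M.valid _ _ hheld) hne))

theorem isF_of_voteRank_eq_neg_one (hstrict : ∀ a, Injective (rank a))
    (hpop : PopularOS E rank M) (hab : E a b)
    (hvote : voteRank (rank a) (M.mA a) (some b) = -1) : isF E rank b :=
  let ⟨a', _, htop⟩ := hpop.exists_isTop_of_voteRank_eq_neg_one hstrict hab hvote
  ⟨a', htop⟩

theorem exists_mB_eq_isTop (hstrict : ∀ a, Injective (rank a)) (hpop : PopularOS E rank M)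
    (hb : isF E rank b) : ∃ a, M.mB b = some a ∧ isTop E rank a b := by
  obtain ⟨a, htop⟩ := hb
  by_cases hMa : M.mA a = some b
  · exact ⟨a, (M.consistent a b).1 hMa, htop⟩
  · refine hpop.exists_isTop_of_voteRank_eq_neg_one hstrict htop.1
      (voteRank_eq_neg_one_iff.2 ⟨b, rfl, fun c hc => htop.2 c (M.valid _ _ hc) ?_⟩)
    rintro rfl
    exact hMa hc

theorem isTop_or_isR_of_mA_eq (hstrict : ∀ a, Injective (rank a)) (hpop : PopularOS E rank M)
    (hMa : M.mA a = some b) : isTop E rank a b ∨ isR E rank a b := by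
  by_cases hbF : isF E rank b
  · obtain ⟨a', ha', htop⟩ := hpop.exists_mB_eq_isTop hstrict hbF
    rw [← M.consistent] at ha'
    exact Or.inl (M.eq_of_mA_eq_some ha' hMa ▸ htop)
  obtain ⟨r, hr⟩ := exists_isR (hstrict a) (M.valid _ _ hMa) hbF
  obtain rfl | hne := eq_or_ne b r
  · exact Or.inr hr
  refine absurd (hpop.isF_of_voteRank_eq_neg_one hstrict hr.1 ?_) hr.2.1
  rw [hMa, voteRank_eq_neg_one_iff]
  exact ⟨r, rfl, fun c hc => Option.some_inj.1 hc ▸ hr.2.2 b (M.valid _ _ hMa) hbF hne⟩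

theorem not_isR_of_mA_eq_none (hstrict : ∀ a, Injective (rank a)) (hpop : PopularOS E rank M)
    (hMa : M.mA a = none) : ¬ isR E rank a b := fun hr =>
  hr.2.1 (hpop.isF_of_voteRank_eq_neg_one hstrict hr.1 (by rw [hMa]; rfl))

end PopularOS

section Sufficiency

variable {E : A → B → Prop} {rank : A → B → ℕ} {M : BMatching A B E} {a : A} {b : B}

theorem isF_of_voteRank_eq_neg_one_of_isTop_or_isR (hstrict : Injective (rank a))
    (hM : ∀ c, M.mA a = some c → isTop E rank a c ∨ isR E rank a c)
    (hnone : M.mA a = none → ∀ r, ¬ isR E rank a r) (hab : E a b)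
    (hvote : voteRank (rank a) (M.mA a) (some b) = -1) : isF E rank b := by
  by_contra hbF
  obtain ⟨b', hb', hlt⟩ := voteRank_eq_neg_one_iff.1 hvote
  obtain rfl := Option.some_injective _ hb'
  cases hMa : M.mA a with
  | none =>
    obtain ⟨r, hr⟩ := exists_isR hstrict hab hbF
    exact hnone hMa r hr
  | some c =>
    have hbc : rank a b < rank a c := hlt c hMa
    rcases hM c hMa with htop | hr
    · exact (htop.2 b hab (ne_of_apply_ne _ hbc.ne)).asymm hbc
    · exact (hr.2.2 b hab hbF (ne_of_apply_ne _ hbc.ne)).asymm hbc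

theorem popularOS_of_isTop_of_isTop_or_isR [Fintype A] (hstrict : ∀ a, Injective (rank a))
    (hF : ∀ b, isF E rank b → ∃ a, M.mB b = some a ∧ isTop E rank a b)
    (hA : ∀ a, (∀ b, M.mA a = some b → isTop E rank a b ∨ isR E rank a b) ∧
      (M.mA a = none → ∀ b, ¬ isR E rank a b)) :
    PopularOS E rank M := by
  intro N
  set v := fun x => voteRank (rank x) (M.mA x) (N.mA x)
  -- the `M`-holder of the job `x` gets in `N`
  let φ x := ((N.mA x).bind M.mB).getD x
  have key : ∀ x, v x < 0 →
      0 < v (φ x) ∧ ∃ b, N.mA x = some b ∧ M.mA (φ x) = some b := by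
    intro x hx
    have hvx : v x = -1 := by linarith [neg_one_le_voteRank (rank x) (M.mA x) (N.mA x)]
    obtain ⟨b, hNx, hlt⟩ := voteRank_eq_neg_one_iff.1 hvx
    have hvote : voteRank (rank x) (M.mA x) (some b) = -1 := hNx ▸ hvx
    obtain ⟨y, hy, htop⟩ := hF b (isF_of_voteRank_eq_neg_one_of_isTop_or_isR (hstrict x)
      (hA x).1 (hA x).2 (N.valid _ _ hNx) hvote)
    have hφ : φ x = y := by simp [φ, hNx, hy]
    have hMy : M.mA y = some b := (M.consistent y b).2 hy
    refine ⟨?_, b, hNx, hφ ▸ hMy⟩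
    have hvy : v y = 1 :=
      voteRank_eq_one_iff.2 ⟨b, hMy, fun c hc => htop.2 c (N.valid _ _ hc) ?_⟩
    · rw [hφ, hvy]
      exact one_pos
    intro hcb
    rw [hcb] at hc
    obtain rfl := N.eq_of_mA_eq_some hc hNx
    exact lt_irrefl _ (hlt b hMy)
  refine sum_nonneg_of_injOn v φ (fun x => neg_one_le_voteRank _ _ _) (fun x hx => (key x hx).1)
    fun x hx y hy hxy => ?_
  obtain ⟨-, b, hNx, hMx⟩ := key x hx
  obtain ⟨-, c, hNy, hMy⟩ := key y hy
  rw [hxy, hMy, Option.some_inj] at hMx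
  exact N.eq_of_mA_eq_some hNx (hMx ▸ hNy)

end Sufficiency

theorem one_sided_popular_characterization_general
    [Fintype A] (E : A → B → Prop) (rank : A → B → ℕ)
    (hstrict : ∀ a, Function.Injective (rank a))
    (M : BMatching A B E) :
    PopularOS E rank M ↔
      ((∀ b, isF E rank b → ∃ a, M.mB b = some a ∧ isTop E rank a b) ∧
       (∀ a, (∀ b, M.mA a = some b → isTop E rank a b ∨ isR E rank a b) ∧
             (M.mA a = none → ∀ b, ¬ isR E rank a b))) :=
  ⟨fun hpop => ⟨fun _ hb => hpop.exists_mB_eq_isTop hstrict hb,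
      fun _ => ⟨fun _ => hpop.isTop_or_isR_of_mA_eq hstrict,
        fun hMa _ => hpop.not_isR_of_mA_eq_none hstrict hMa⟩⟩,
    fun ⟨hF, hA⟩ => popularOS_of_isTop_of_isTop_or_isR hstrict hF hA⟩

/-- Characterization of popular matchings in the one-sided model (Abraham et
al.): `M` is popular iff (i) every f-job is matched by `M` to an applicant
whose top choice it is, and (ii) every applicant is matched to its top job
`f_a` or to its most preferred non-f-job `r_a` (an applicant may only be
unmatched when it has no non-f-job, i.e. `r_a = ∞`). -/
theorem one_sided_popular_characterization
    [Fintype A] [Fintype B] (E : A → B → Prop) (rank : A → B → ℕ)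
    (hstrict : ∀ a, Function.Injective (rank a))
    (M : BMatching A B E) :
    PopularOS E rank M ↔
      ((∀ b, isF E rank b → ∃ a, M.mB b = some a ∧ isTop E rank a b) ∧
       (∀ a, (∀ b, M.mA a = some b → isTop E rank a b ∨ isR E rank a b) ∧
             (M.mA a = none → ∀ b, ¬ isR E rank a b))) :=
  one_sided_popular_characterization_general E rank hstrict M
end

section
/- Let I and I' be two instances of the two-sided model with one-sided ties on the same graph G, differing only in the preferences of a single agent a ∈ A, and let e = {a,b} ∈ E. If a matching M with e ∈ M is popular in the hybrid instance H_e, then M is popular in both I and I'. -/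
/-- Vote of a vertex that is indifferent among all its neighbours and only
prefers being matched to being unmatched (a `B`-vertex with one big tie). -/
def voteSat {Y : Type*} : Option Y → Option Y → ℤ
  | some _, none => 1
  | none, some _ => -1
  | _, _ => 0

variable {A B : Type*}

/-- Popularity margin in the two-sided model with one-sided ties:
`A`-vertices vote by their strict preferences, `B`-vertices by saturation. -/
def deltaTS [Fintype A] [Fintype B] {E : A → B → Prop} (rank : A → B → ℕ)
    (M N : BMatching A B E) : ℤ :=
  (∑ a, voteRank (rank a) (M.mA a) (N.mA a)) + (∑ b, voteSat (M.mB b) (N.mB b))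

/-- `M` is popular in the two-sided model with one-sided ties. -/
def PopularTS [Fintype A] [Fintype B] {E : A → B → Prop} (rank : A → B → ℕ)
    (M : BMatching A B E) : Prop :=
  ∀ N : BMatching A B E, 0 ≤ deltaTS rank M N


/-- `rk3` is a valid preference order for the hybrid instance `H_e` for the
edge `e = {a, b}`, built from the two instances `rk1` and `rk2` that differ
only in agent `a`'s preferences: agents other than `a` keep their preferences,
and `a` places every neighbour preferred to `b` in `rk1` or in `rk2` above `b`,
and `b` above all remaining neighbours. -/
def IsHybrid {A B : Type*} (E : A → B → Prop) (rk1 rk2 rk3 : A → B → ℕ)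
    (a : A) (b : B) : Prop :=
  (∀ a', a' ≠ a → rk3 a' = rk1 a') ∧
  (∀ z, E a z → (rk1 a z < rk1 a b ∨ rk2 a z < rk2 a b) → rk3 a z < rk3 a b) ∧
  (∀ z, E a z → z ≠ b → ¬ (rk1 a z < rk1 a b ∨ rk2 a z < rk2 a b) →
      rk3 a b < rk3 a z)

theorem voteRank_some_le_voteRank_some {Y : Type*} {r s : Y → ℕ} (hr : Function.Injective r)
    {y : Y} {o : Option Y} (hpref : ∀ z, o = some z → r z < r y → s z < s y) :
    voteRank s (some y) o ≤ voteRank r (some y) o := by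
  cases o with
  | none => simp [voteRank]
  | some z =>
    have hzy := hpref z rfl
    by_cases hz : z = y
    · subst hz
      simp [voteRank]
    have hne : r y ≠ r z := fun h => hz (hr h).symm
    simp only [voteRank]
    by_cases hsz : s z < s y
    · split_ifs <;> omega
    · have hyz : r y < r z := by
        have := mt hzy hsz
        omega
      split_ifs <;> omega

variable [Fintype A] [Fintype B] {E : A → B → Prop}

theorem deltaTS_le_deltaTS_of_matched_partner_promoted {r s : A → B → ℕ} {a : A} {b : B}
    (hr : Function.Injective (r a)) (hsr : ∀ a', a' ≠ a → s a' = r a')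
    (hpref : ∀ z, E a z → r a z < r a b → s a z < s a b)
    {M : BMatching A B E} (hM : M.mA a = some b) (N : BMatching A B E) :
    deltaTS s M N ≤ deltaTS r M N := by
  unfold deltaTS
  gcongr with a' _
  by_cases ha' : a' = a
  · subst ha'
    rw [hM]
    exact voteRank_some_le_voteRank_some hr fun z hz => hpref z (N.valid a' z hz)
  · rw [hsr a' ha']

theorem PopularTS.of_matched_partner_promoted {r s : A → B → ℕ} {a : A} {b : B}
    (hr : Function.Injective (r a)) (hsr : ∀ a', a' ≠ a → s a' = r a')
    (hpref : ∀ z, E a z → r a z < r a b → s a z < s a b)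
    {M : BMatching A B E} (hM : M.mA a = some b) (hpop : PopularTS s M) :
    PopularTS r M := fun N =>
  (hpop N).trans (deltaTS_le_deltaTS_of_matched_partner_promoted hr hsr hpref hM N)

theorem hybrid_popular_implies_robust_general
    {A B : Type*} [Fintype A] [Fintype B] (E : A → B → Prop)
    (rk1 rk2 rk3 : A → B → ℕ)
    (h1 : ∀ a, Function.Injective (rk1 a))
    (h2 : ∀ a, Function.Injective (rk2 a))
    (a : A) (b : B)
    (hdiff : ∀ a', a' ≠ a → rk1 a' = rk2 a')
    (hhyb : IsHybrid E rk1 rk2 rk3 a b)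
    (M : BMatching A B E) (hM : M.mA a = some b)
    (hpop : PopularTS rk3 M) :
    PopularTS rk1 M ∧ PopularTS rk2 M := by
  obtain ⟨hrk3, hpref, -⟩ := hhyb
  exact ⟨hpop.of_matched_partner_promoted (h1 a) hrk3 (fun z hz h => hpref z hz (Or.inl h)) hM,
    hpop.of_matched_partner_promoted (h2 a) (fun a' ha' => (hrk3 a' ha').trans (hdiff a' ha'))
      (fun z hz h => hpref z hz (Or.inr h)) hM⟩

/-- If a matching `M` containing the edge `e = {a,b}` is popular in the hybrid
instance `H_e`, then it is popular in both original instances `I` and `I'`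
(which differ only in agent `a`'s preferences). -/
theorem hybrid_popular_implies_robust
    {A B : Type*} [Fintype A] [Fintype B] (E : A → B → Prop)
    (rk1 rk2 rk3 : A → B → ℕ)
    (h1 : ∀ a, Function.Injective (rk1 a))
    (h2 : ∀ a, Function.Injective (rk2 a))
    (h3 : ∀ a, Function.Injective (rk3 a))
    (a : A) (b : B) (hab : E a b)
    (hdiff : ∀ a', a' ≠ a → rk1 a' = rk2 a')
    (hhyb : IsHybrid E rk1 rk2 rk3 a b)
    (M : BMatching A B E) (hM : M.mA a = some b)
    (hpop : PopularTS rk3 M) :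
    PopularTS rk1 M ∧ PopularTS rk2 M :=
  hybrid_popular_implies_robust_general E rk1 rk2 rk3 h1 h2 a b hdiff hhyb M hM hpop
end

section
/- Let I and I' be two instances of the two-sided model with one-sided ties on the same graph, differing only in the preferences of a single agent a, and let e = {a,b} be an edge. If a matching M with e ∈ M is popular in both I and I', then M is popular in the hybrid instance H_e. -/
variable {A B : Type*}

/-- If a matching `M` containing the edge `e = {a,b}` is popular in both
instances `I` and `I'` (which differ only in agent `a`'s preferences), then it
is popular in the hybrid instance `H_e`. -/
theorem robust_implies_hybrid_popular
    {A B : Type*} [Fintype A] [Fintype B] (E : A → B → Prop)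
    (rk1 rk2 rk3 : A → B → ℕ)
    (h1 : ∀ a, Function.Injective (rk1 a))
    (h2 : ∀ a, Function.Injective (rk2 a))
    (h3 : ∀ a, Function.Injective (rk3 a))
    (a : A) (b : B) (hab : E a b)
    (hdiff : ∀ a', a' ≠ a → rk1 a' = rk2 a')
    (hhyb : IsHybrid E rk1 rk2 rk3 a b)
    (M : BMatching A B E) (hM : M.mA a = some b)
    (hpop1 : PopularTS rk1 M) (hpop2 : PopularTS rk2 M) :
    PopularTS rk3 M := by
  classical
  intro N
  obtain ⟨h31, hpref, hworse⟩ := hhyb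
  have hsum : ∀ (rk : A → B → ℕ), (∀ a', a' ≠ a → rk3 a' = rk a') →
      deltaTS rk3 M N =
        deltaTS rk M N
        + (voteRank (rk3 a) (M.mA a) (N.mA a)
            - voteRank (rk a) (M.mA a) (N.mA a)) := by
    intro rk h
    unfold deltaTS
    have e1 : ∑ a', voteRank (rk3 a') (M.mA a') (N.mA a')
        = ∑ a', voteRank (rk a') (M.mA a') (N.mA a')
          + (voteRank (rk3 a) (M.mA a) (N.mA a)
              - voteRank (rk a) (M.mA a) (N.mA a)) := by
      rw [← Finset.add_sum_erase _ (fun a' => voteRank (rk3 a') (M.mA a') (N.mA a'))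
            (Finset.mem_univ a),
          ← Finset.add_sum_erase _ (fun a' => voteRank (rk a') (M.mA a') (N.mA a'))
            (Finset.mem_univ a)]
      have hs : ∑ x ∈ Finset.univ.erase a, voteRank (rk3 x) (M.mA x) (N.mA x)
          = ∑ x ∈ Finset.univ.erase a, voteRank (rk x) (M.mA x) (N.mA x) :=
        Finset.sum_congr rfl (fun x hx => by rw [h x (Finset.ne_of_mem_erase hx)])
      rw [hs]; ring
    rw [e1]; ring
  have key : voteRank (rk1 a) (M.mA a) (N.mA a) ≤ voteRank (rk3 a) (M.mA a) (N.mA a)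
      ∨ voteRank (rk2 a) (M.mA a) (N.mA a) ≤ voteRank (rk3 a) (M.mA a) (N.mA a) := by
    rw [hM]
    cases hN : N.mA a with
    | none => left; simp [voteRank]
    | some z =>
      by_cases hzb : z = b
      · subst hzb; left; simp [voteRank]
      · have hEz := N.valid a z hN
        by_cases h12 : rk1 a z < rk1 a b ∨ rk2 a z < rk2 a b
        · have h3z := hpref z hEz h12
          have hv3 : voteRank (rk3 a) (some b) (some z) = -1 := by
            simp [voteRank, h3z, not_lt_of_gt h3z]
          rcases h12 with h' | h'
          · left
            have : voteRank (rk1 a) (some b) (some z) = -1 := by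
              simp [voteRank, h', not_lt_of_gt h']
            rw [this, hv3]
          · right
            have : voteRank (rk2 a) (some b) (some z) = -1 := by
              simp [voteRank, h', not_lt_of_gt h']
            rw [this, hv3]
        · have h3z := hworse z hEz hzb h12
          have hv3 : voteRank (rk3 a) (some b) (some z) = 1 := by
            simp [voteRank, h3z]
          rw [hv3]; left
          simp [voteRank]; split_ifs <;> norm_num
  rcases key with hk | hk
  · have := hpop1 N
    have e := hsum rk1 h31
    rw [e]; linarith
  · have := hpop2 N
    have e := hsum rk2 (fun a' ha' => (h31 a' ha').trans (hdiff a' ha'))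
    rw [e]; linarith
end

section
/- Let I and I' be two instances of the two-sided model with one-sided ties differing only in the preferences of agent a. A robust popular matching containing edge e = {a,b} exists for (I, I') if and only if the hybrid instance H_e admits a popular matching containing e. -/
variable {A B : Type*}

lemma voteRank_bounds {Y : Type*} (r : Y → ℕ) (o o' : Option Y) :
    -1 ≤ voteRank r o o' ∧ voteRank r o o' ≤ 1 := by
  rcases o with _ | y <;> rcases o' with _ | y' <;> simp [voteRank] <;>
    split_ifs <;> omega

/-- A robust popular matching containing the edge `e = {a,b}` exists for the
pair of instances `(I, I')` (differing only in agent `a`'s preferences) if and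
only if the hybrid instance `H_e` admits a popular matching containing `e`. -/
theorem robust_iff_hybrid_popular
    {A B : Type*} [Fintype A] [Fintype B] (E : A → B → Prop)
    (rk1 rk2 rk3 : A → B → ℕ)
    (h1 : ∀ a, Function.Injective (rk1 a))
    (h2 : ∀ a, Function.Injective (rk2 a))
    (h3 : ∀ a, Function.Injective (rk3 a))
    (a : A) (b : B) (hab : E a b)
    (hdiff : ∀ a', a' ≠ a → rk1 a' = rk2 a')
    (hhyb : IsHybrid E rk1 rk2 rk3 a b) :
    (∃ M : BMatching A B E, M.mA a = some b ∧
        PopularTS rk1 M ∧ PopularTS rk2 M) ↔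
    (∃ M : BMatching A B E, M.mA a = some b ∧ PopularTS rk3 M) := by
  obtain ⟨he1, he2, he3⟩ := hhyb
  -- key vote comparison lemma
  have vkey : ∀ z : Option B, (∀ z', z = some z' → E a z') →
      voteRank (rk3 a) (some b) z ≤ voteRank (rk1 a) (some b) z ∧
      voteRank (rk3 a) (some b) z ≤ voteRank (rk2 a) (some b) z ∧
      (voteRank (rk3 a) (some b) z = voteRank (rk1 a) (some b) z ∨
       voteRank (rk3 a) (some b) z = voteRank (rk2 a) (some b) z) := by
    intro z hz
    cases z with
    | none => simp [voteRank]
    | some z =>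
      have hEz : E a z := hz z rfl
      by_cases hzb : z = b
      · subst hzb; simp [voteRank]
      · by_cases hp : rk1 a z < rk1 a b ∨ rk2 a z < rk2 a b
        · have hlt : rk3 a z < rk3 a b := he2 z hEz hp
          have v3 : voteRank (rk3 a) (some b) (some z) = -1 := by
            simp [voteRank, Nat.lt_asymm hlt, hlt]
          refine ⟨?_, ?_, ?_⟩
          · rw [v3]; exact (voteRank_bounds _ _ _).1
          · rw [v3]; exact (voteRank_bounds _ _ _).1
          · rcases hp with hp | hp
            · left; rw [v3]; simp [voteRank, Nat.lt_asymm hp, hp]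
            · right; rw [v3]; simp [voteRank, Nat.lt_asymm hp, hp]
        · push_neg at hp
          have hlt : rk3 a b < rk3 a z := by
            apply he3 z hEz hzb; push_neg; exact hp
          have hlt1 : rk1 a b < rk1 a z := by
            rcases Nat.lt_trichotomy (rk1 a b) (rk1 a z) with h | h | h
            · exact h
            · exact absurd (h1 a h.symm) hzb
            · exact absurd h (not_lt.mpr hp.1)
          have hlt2 : rk2 a b < rk2 a z := by
            rcases Nat.lt_trichotomy (rk2 a b) (rk2 a z) with h | h | h
            · exact h
            · exact absurd (h2 a h.symm) hzb
            · exact absurd h (not_lt.mpr hp.2)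
          constructor
          · simp [voteRank, hlt, hlt1]
          constructor
          · simp [voteRank, hlt, hlt2]
          · left; simp [voteRank, hlt, hlt1]
  -- delta difference lemma
  have hsum : ∀ (M N : BMatching A B E) (rk rk' : A → B → ℕ),
      (∀ a', a' ≠ a → rk a' = rk' a') →
      deltaTS rk M N = deltaTS rk' M N
        + (voteRank (rk a) (M.mA a) (N.mA a)
            - voteRank (rk' a) (M.mA a) (N.mA a)) := by
    intro M N rk rk' h
    unfold deltaTS
    have h2 : ∑ x, (voteRank (rk x) (M.mA x) (N.mA x)
          - voteRank (rk' x) (M.mA x) (N.mA x))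
        = voteRank (rk a) (M.mA a) (N.mA a)
          - voteRank (rk' a) (M.mA a) (N.mA a) := by
      apply Finset.sum_eq_single_of_mem a (Finset.mem_univ a)
      intro x _ hx
      rw [h x hx]; ring
    rw [Finset.sum_sub_distrib] at h2
    linarith
  have he12 : ∀ a', a' ≠ a → rk3 a' = rk2 a' := by
    intro a' ha'; rw [he1 a' ha', hdiff a' ha']
  constructor
  · rintro ⟨M, hMa, hp1, hp2⟩
    refine ⟨M, hMa, ?_⟩
    intro N
    obtain ⟨hv1, hv2, hv3⟩ := vkey (N.mA a) (fun z' hz' => N.valid a z' hz')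
    rcases hv3 with hv | hv
    · have := hsum M N rk3 rk1 he1
      rw [hMa] at this
      rw [this, hv]
      simpa using hp1 N
    · have := hsum M N rk3 rk2 he12
      rw [hMa] at this
      rw [this, hv]
      simpa using hp2 N
  · rintro ⟨M, hMa, hp3⟩
    refine ⟨M, hMa, ?_, ?_⟩
    · intro N
      obtain ⟨hv1, hv2, hv3⟩ := vkey (N.mA a) (fun z' hz' => N.valid a z' hz')
      have := hsum M N rk1 rk3 (fun a' ha' => (he1 a' ha').symm)
      rw [hMa] at this
      have := hp3 N
      linarith
    · intro N
      obtain ⟨hv1, hv2, hv3⟩ := vkey (N.mA a) (fun z' hz' => N.valid a z' hz')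
      have := hsum M N rk2 rk3 (fun a' ha' => (he12 a' ha').symm)
      rw [hMa] at this
      have := hp3 N
      linarith
end

section
/- In the two-sided model with one-sided ties, if a matching M satisfies the three no-(1,0)-edge conditions and M' is any matching, then for every connected component ρ of the symmetric difference M ⊕ M' that is a cycle, the sum over vertices u ∈ ρ of vote_u(M'(u), M(u)) is at most 0. -/
variable {A B : Type*}

/-- Adjacency of vertices of `A ⊕ B` in the bipartite graph. -/
def adjV (E : A → B → Prop) : A ⊕ B → A ⊕ B → Prop
  | .inl a, .inr b => E a b
  | .inr b, .inl a => E a b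
  | _, _ => False

/-- The pair of vertices forms an edge of the matching `M`. -/
def inM {E : A → B → Prop} (M : BMatching A B E) : A ⊕ B → A ⊕ B → Prop
  | .inl a, .inr b => M.mA a = some b
  | .inr b, .inl a => M.mA a = some b
  | _, _ => False

/-- A vertex of `A ⊕ B` is matched by `M`. -/
def matchedV {E : A → B → Prop} (M : BMatching A B E) : A ⊕ B → Prop
  | .inl a => (M.mA a).isSome
  | .inr b => (M.mB b).isSome

/-- The list of vertices forms a walk in `G` whose edges alternately belong to
`M`; the flag records whether the next edge must be in `M`. -/
def alternates (E : A → B → Prop) (M : BMatching A B E) :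
    Bool → List (A ⊕ B) → Prop
  | _, [] => True
  | _, [_] => True
  | flag, x :: y :: rest =>
      adjV E x y ∧ (inM M x y ↔ flag = true) ∧ alternates E M (!flag) (y :: rest)

/-- An alternating path with respect to `M`: a simple walk whose edges
alternate between non-matching and matching edges (in either phase). -/
def IsAltPath (E : A → B → Prop) (M : BMatching A B E) (l : List (A ⊕ B)) : Prop :=
  l.Nodup ∧ (alternates E M true l ∨ alternates E M false l)

/-- An alternating cycle with respect to `M`: the closed walk obtained by
returning to the first vertex alternates, the vertices are distinct, and the
number of edges is even. -/
def IsAltCycle (E : A → B → Prop) (M : BMatching A B E) (l : List (A ⊕ B)) : Prop :=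
  match l with
  | [] => False
  | x :: xs => (x :: xs).Nodup ∧ 2 ≤ (x :: xs).length ∧
      Even (x :: xs).length ∧ alternates E M true ((x :: xs) ++ [x])

/-- The edge `{a, b}` is a `(1,0)` edge with respect to `M`: it is not in `M`,
`a` strictly prefers `b` to its `M`-partner (`α = 1`), and `b` is matched by
`M` (so `b` is indifferent, `β = 0`). -/
def isOneZero (E : A → B → Prop) (rank : A → B → ℕ) (M : BMatching A B E)
    (a : A) (b : B) : Prop :=
  E a b ∧ M.mA a ≠ some b ∧
    voteRank (rank a) (some b) (M.mA a) = 1 ∧ (M.mB b).isSome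

/-- The unordered pair `{x, y}` of vertices of `A ⊕ B` is a `(1,0)` edge. -/
def isOneZeroPair (E : A → B → Prop) (rank : A → B → ℕ) (M : BMatching A B E) :
    A ⊕ B → A ⊕ B → Prop
  | .inl a, .inr b => isOneZero E rank M a b
  | .inr b, .inl a => isOneZero E rank M a b
  | _, _ => False

/-- `l` contains `u, v` as consecutive vertices (an edge of the walk `l`). -/
def hasEdge {V : Type*} (l : List V) (u v : V) : Prop :=
  ∃ l₁ l₂, l = l₁ ++ u :: v :: l₂

/-- The walk `l` contains a `(1,0)` edge. -/
def hasOneZero (E : A → B → Prop) (rank : A → B → ℕ) (M : BMatching A B E)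
    (l : List (A ⊕ B)) : Prop :=
  ∃ x y, hasEdge l x y ∧ isOneZeroPair E rank M x y

/-- The walk `l` contains two or more (distinct occurrences of) `(1,0)` edges. -/
def hasTwoOneZero (E : A → B → Prop) (rank : A → B → ℕ) (M : BMatching A B E)
    (l : List (A ⊕ B)) : Prop :=
  ∃ l₁ l₂ l₃ x y x' y',
    l = l₁ ++ x :: y :: l₂ ++ x' :: y' :: l₃ ∧
    isOneZeroPair E rank M x y ∧ isOneZeroPair E rank M x' y'

/-- Vote of a vertex of `A ⊕ B` comparing its partners in `M'` and `M`. -/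
def voteV {E : A → B → Prop} (rank : A → B → ℕ)
    (M' M : BMatching A B E) : A ⊕ B → ℤ
  | .inl a => voteRank (rank a) (M'.mA a) (M.mA a)
  | .inr b => voteSat (M'.mB b) (M.mB b)

/-!
Along a cycle of `M ⊕ M'` every vertex is matched in `M` and in `M'`, to its two neighbours on
the cycle. A `B`-vertex is therefore indifferent between its two partners and votes `0`. An
`A`-vertex `a` votes `+1` only if it prefers its `M'`-partner `b'`; but `b'` lies on the cycle, so
it is matched in `M`, and `{a, b'}` would be a `(1,0)` edge of an alternating cycle.
-/

section

variable {E : A → B → Prop}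

lemma inM_comm (M : BMatching A B E) (u v : A ⊕ B) : inM M u v ↔ inM M v u := by
  cases u <;> cases v <;> rfl

lemma voteSat_le_zero_of_some {Y : Type*} (o : Option Y) (y : Y) : voteSat o (some y) ≤ 0 := by
  cases o <;> simp [voteSat]

lemma voteRank_some_le_zero {Y : Type*} (r : Y → ℕ) {y y' : Y} (h : ¬ r y < r y') :
    voteRank r (some y) (some y') ≤ 0 := by
  simp only [voteRank, if_neg h]
  split <;> norm_num

lemma List.IsChain.rel_of_hasEdge {V : Type*} {R : V → V → Prop} {w : List V} {u v : V}
    (hw : w.IsChain R) (huv : hasEdge w u v) : R u v := by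
  obtain ⟨l₁, l₂, rfl⟩ := huv
  exact List.isChain_pair.mp <| hw.infix ⟨l₁, l₂, by simp⟩

lemma hasEdge_getElem {V : Type*} (w : List V) (i : ℕ) (h : i + 1 < w.length) :
    hasEdge w w[i] w[i + 1] := by
  refine ⟨w.take i, w.drop (i + 2), ?_⟩
  conv_lhs => rw [← List.take_append_drop i w]
  rw [List.drop_eq_getElem_cons (by omega), List.drop_eq_getElem_cons (by omega)]

lemma alternates.inM_getElem_iff {M : BMatching A B E} {f : Bool} {w : List (A ⊕ B)}
    (hw : alternates E M f w) (i : ℕ) (h : i + 1 < w.length) :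
    inM M w[i] w[i + 1] ↔ (Even i ↔ f = true) := by
  induction w generalizing f i with
  | nil => simp at h
  | cons y t ih =>
    cases t with
    | nil => simp at h
    | cons z r =>
      obtain ⟨-, hyz, hrest⟩ := hw
      cases i with
      | zero => simpa using hyz
      | succ k =>
        rw [List.getElem_cons_succ, List.getElem_cons_succ, ih hrest k (by simpa using h),
          Nat.even_add_one]
        cases f <;> simp

lemma exists_incident_edge_of_parity {V : Type*} {x u : V} {xs : List V} (hev : Even (x :: xs).length)
    (hu : u ∈ x :: xs) (p : Bool) :
    ∃ i, ∃ h : i + 1 < (x :: xs ++ [x]).length, (Even i ↔ p = true) ∧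
      (u = (x :: xs ++ [x])[i] ∨ u = (x :: xs ++ [x])[i + 1]) := by
  obtain ⟨j, hj, rfl⟩ := List.mem_iff_getElem.mp hu
  have hlen : (x :: xs ++ [x]).length = (x :: xs).length + 1 := by simp
  have hget : (x :: xs ++ [x])[j]'(by omega) = (x :: xs)[j] := List.getElem_append_left hj
  by_cases hjp : Even j ↔ p = true
  · exact ⟨j, by omega, hjp, .inl hget.symm⟩
  · rcases Nat.eq_zero_or_pos j with rfl | hj0
    · -- `x` also ends the walk, as the endpoint of the odd closing edge
      refine ⟨(x :: xs).length - 1, by omega, ?_, .inr ?_⟩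
      · obtain ⟨m, hm⟩ := hev
        have hodd : ¬ Even ((x :: xs).length - 1) := by
          rw [Nat.not_even_iff_odd]; exact ⟨m - 1, by omega⟩
        simp_all
      · exact (List.getElem_concat_length (by simp) _).symm
    · refine ⟨j - 1, by omega, ?_, .inr ?_⟩
      · have hpred := Nat.even_add_one (n := j - 1)
        rw [Nat.sub_add_cancel hj0] at hpred
        tauto
      · simp only [Nat.sub_add_cancel hj0, hget]

lemma exists_walk_neighbour_of_mem_altCycle {M : BMatching A B E} {x u : A ⊕ B}
    {xs : List (A ⊕ B)} (hc : IsAltCycle E M (x :: xs)) (hu : u ∈ x :: xs) (p : Bool) :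
    ∃ v, (inM M u v ↔ p = true) ∧ (hasEdge (x :: xs ++ [x]) u v ∨ hasEdge (x :: xs ++ [x]) v u) := by
  obtain ⟨-, -, hev, halt⟩ := hc
  obtain ⟨i, h, hip, rfl | rfl⟩ := exists_incident_edge_of_parity hev hu p
  · exact ⟨_, (halt.inM_getElem_iff i h).trans (by simpa using hip), .inl (hasEdge_getElem _ i h)⟩
  · refine ⟨_, ?_, .inr (hasEdge_getElem _ i h)⟩
    rw [inM_comm, halt.inM_getElem_iff i h]
    simpa using hip

lemma exists_inM_of_mem_altCycle {M : BMatching A B E} {x u : A ⊕ B} {xs : List (A ⊕ B)}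
    (hc : IsAltCycle E M (x :: xs)) (hu : u ∈ x :: xs) : ∃ v, inM M u v := by
  obtain ⟨v, hv, -⟩ := exists_walk_neighbour_of_mem_altCycle hc hu true
  exact ⟨v, hv.mpr rfl⟩

lemma exists_inM_walk_neighbour_of_mem_altCycle {M M' : BMatching A B E} {x u : A ⊕ B}
    {xs : List (A ⊕ B)} (hc : IsAltCycle E M (x :: xs))
    (hM' : (x :: xs ++ [x]).IsChain fun u v => ¬ inM M u v → inM M' u v) (hu : u ∈ x :: xs) :
    ∃ v, inM M' u v ∧ (hasEdge (x :: xs ++ [x]) u v ∨ hasEdge (x :: xs ++ [x]) v u) := by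
  obtain ⟨v, hv, hedge⟩ := exists_walk_neighbour_of_mem_altCycle hc hu false
  have hnot : ¬ inM M u v := by simpa using hv
  refine ⟨v, ?_, hedge⟩
  rcases hedge with hedge | hedge
  · exact hM'.rel_of_hasEdge hedge hnot
  · rw [inM_comm] at hnot ⊢
    exact hM'.rel_of_hasEdge hedge hnot

lemma voteV_le_zero_of_mem_altCycle {rank : A → B → ℕ} {M M' : BMatching A B E}
    {x u : A ⊕ B} {xs : List (A ⊕ B)} (hc : IsAltCycle E M (x :: xs))
    (hcyc : ¬ hasOneZero E rank M (x :: xs ++ [x]))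
    (hM' : (x :: xs ++ [x]).IsChain fun u v => ¬ inM M u v → inM M' u v) (hu : u ∈ x :: xs) :
    voteV rank M' M u ≤ 0 := by
  obtain ⟨v, hMv⟩ := exists_inM_of_mem_altCycle hc hu
  rcases u with a | b <;> rcases v with a₀ | b <;> simp only [inM] at hMv
  · obtain ⟨v', hM'v', hedge⟩ := exists_inM_walk_neighbour_of_mem_altCycle hc hM' hu
    rcases v' with _ | b' <;> simp only [inM] at hM'v'
    by_cases hlt : rank a b' < rank a b
    · have hb'_mem : Sum.inr b' ∈ x :: xs := by
        have : Sum.inr b' ∈ x :: xs ++ [x] := by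
          rcases hedge with ⟨l₁, l₂, he⟩ | ⟨l₁, l₂, he⟩ <;> simp [he]
        rw [List.mem_append, List.mem_singleton] at this
        exact this.elim id (· ▸ List.mem_cons_self)
      obtain ⟨a₂ | _, hMb'⟩ := exists_inM_of_mem_altCycle hc hb'_mem <;> simp only [inM] at hMb'
      have hone : isOneZero E rank M a b' :=
        ⟨M'.valid a b' hM'v', by rw [hMv, Ne, Option.some_inj]; rintro rfl; exact lt_irrefl _ hlt,
          by simp [voteRank, hMv, hlt], by simp [(M.consistent a₂ b').mp hMb']⟩
      rcases hedge with hedge | hedge <;> exact (hcyc ⟨_, _, hedge, hone⟩).elim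
    · simpa [voteV, hMv, hM'v'] using voteRank_some_le_zero (rank a) hlt
  · simpa [voteV, (M.consistent a₀ b).mp hMv] using voteSat_le_zero_of_some (M'.mB b) a₀

end

theorem cycle_component_vote_nonpos_general
    (E : A → B → Prop) (rank : A → B → ℕ)
    (M : BMatching A B E)
    (hcyc : ∀ l x xs, l = x :: xs → IsAltCycle E M l →
      ¬ hasOneZero E rank M (l ++ [x]))
    (M' : BMatching A B E)
    (l : List (A ⊕ B)) (x : A ⊕ B) (xs : List (A ⊕ B)) (hl : l = x :: xs)
    (hc : IsAltCycle E M l)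
    (hsymmdiff : (l ++ [x]).Chain' (fun u v =>
      (inM M u v → ¬ inM M' u v) ∧ (¬ inM M u v → inM M' u v))) :
    (l.map (voteV rank M' M)).sum ≤ 0 := by
  subst hl
  have hM' := hsymmdiff.imp fun _ _ h => h.2
  simpa using List.sum_le_card_nsmul _ 0 <| List.forall_mem_map.mpr fun _ hu =>
    voteV_le_zero_of_mem_altCycle hc (hcyc _ x xs rfl hc) hM' hu

/-- If `M` satisfies the three no-`(1,0)`-edge conditions and `M'` is any
matching, then every connected component of `M ⊕ M'` that is a cycle (an
alternating cycle whose edges alternate between `M \ M'` and `M' \ M`)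
contributes a vertex-vote total of at most `0`. -/
theorem cycle_component_vote_nonpos
    [Fintype A] [Fintype B] (E : A → B → Prop) (rank : A → B → ℕ)
    (hstrict : ∀ a, Function.Injective (rank a))
    (M : BMatching A B E)
    (hcyc : ∀ l x xs, l = x :: xs → IsAltCycle E M l →
      ¬ hasOneZero E rank M (l ++ [x]))
    (hpathfree : ∀ l x xs, l = x :: xs → IsAltPath E M l →
      ¬ matchedV M x → ¬ hasOneZero E rank M l)
    (hpathtwo : ∀ l, IsAltPath E M l → ¬ hasTwoOneZero E rank M l)
    (M' : BMatching A B E)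
    (l : List (A ⊕ B)) (x : A ⊕ B) (xs : List (A ⊕ B)) (hl : l = x :: xs)
    (hc : IsAltCycle E M l)
    (hsymmdiff : (l ++ [x]).Chain' (fun u v =>
      (inM M u v → ¬ inM M' u v) ∧ (¬ inM M u v → inM M' u v))) :
    (l.map (voteV rank M' M)).sum ≤ 0 :=
  cycle_component_vote_nonpos_general E rank M hcyc M' l x xs hl hc hsymmdiff
end

section
/- In the one-sided model, let I and I' differ only in the preference order of agent a₁, with the same top choice f^I_{a₁} = f^{I'}_{a₁}. If M is popular in I and M(a₁) = f^I_{a₁}, then M is popular in I'. -/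
variable {A B : Type*}

/-- One-sided model, robustness case (2b): instances `I`, `I'` (rank functions
`rk1`, `rk2`) differ only in the preference order of a single applicant `a₁`,
and `a₁`'s top choice is the same in both instances.  If `M` is popular in `I`
and matches `a₁` to its top choice, then `M` is popular in `I'`. -/
theorem one_sided_robust_top_choice_case
    [Fintype A] [Fintype B] (E : A → B → Prop)
    (rk1 rk2 : A → B → ℕ)
    (hstrict1 : ∀ a, Function.Injective (rk1 a))
    (hstrict2 : ∀ a, Function.Injective (rk2 a))
    (a₁ : A) (hdiff : ∀ a, a ≠ a₁ → rk1 a = rk2 a)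
    (hsametop : ∀ b, isTop E rk1 a₁ b ↔ isTop E rk2 a₁ b)
    (M : BMatching A B E) (hpop : PopularOS E rk1 M)
    (b₁ : B) (hmatch : M.mA a₁ = some b₁) (htop : isTop E rk1 a₁ b₁) :
    PopularOS E rk2 M := by
  intro N
  have h := hpop N
  have heq : ∑ a, voteRank (rk2 a) (M.mA a) (N.mA a)
      = ∑ a, voteRank (rk1 a) (M.mA a) (N.mA a) := by
    apply Finset.sum_congr rfl
    intro a _
    by_cases ha : a = a₁
    · subst ha
      rw [hmatch]
      have htop2 := (hsametop b₁).mp htop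
      cases hN : N.mA a with
      | none => simp [voteRank, hN]
      | some b' =>
        by_cases hb : b' = b₁
        · subst hb; simp [voteRank, hN]
        · have hE := N.valid _ _ hN
          have h1 := htop.2 b' hE hb
          have h2 := htop2.2 b' hE hb
          simp [voteRank, hN, h1, h2]
    · rw [hdiff a ha]
  rw [heq]; exact h
end
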